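/- Let G be a torsion-free group, C ⊆ G finite with |C| ≥ 3, U a 2-atom for C, and k ≥ 0 an integer with |UC| ≤ |U| + |C| + k. Then |U| ≤ k + 3. -/

import Mathlib

open Pointwise

/-- `V` is an `n`-fragment for `C`: `|V| ≥ n` and `|VC| - |V|` attains the minimum
`κ_n(C) = min {|XC| - |X| : X ⊆ G finite, |X| ≥ n}`. -/
def IsNFragment {G : Type*} [Group G] [DecidableEq G] (n : ℕ) (C V : Finset G) : Prop :=
  n ≤ V.card ∧ ∀ X : Finset G, n ≤ X.card →
    ((V * C).card : ℤ) - V.card ≤ ((X * C).card : ℤ) - X.card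

/-- `U` is an `n`-atom for `C`: an `n`-fragment of minimal cardinality. -/
def IsNAtom {G : Type*} [Group G] [DecidableEq G] (n : ℕ) (C U : Finset G) : Prop :=
  IsNFragment n C U ∧ ∀ V : Finset G, IsNFragment n C V → U.card ≤ V.card

/-!
Since `G` is torsion-free, a `2`-atom meets each of its nontrivial left translates in at most
one point: otherwise the intersection would be a `2`-fragment, hence the whole atom, which would
then be invariant under a nontrivial translation. The same property passes to the inverse set.
Let `V` be a `2`-atom for `U⁻¹`. Testing its minimality against `C⁻¹` gives
`|VU⁻¹| ≤ |U| + |V| + k`. Covering `VU⁻¹` by the translates `vU⁻¹` (`v ∈ V`), or by the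
translates `Vb` (`b ∈ U⁻¹`), all pairwise meeting in at most one point, gives
`|V||U| ≤ |VU⁻¹| + (m choose 2)` with `m = min(|U|, |V|)`, and the two bounds force `|U| ≤ k + 3`.
-/

open Finset

lemma sum_card_le_card_biUnion_add_choose_two {ι α : Type*} [DecidableEq ι] [DecidableEq α]
    (s : Finset ι) (f : ι → Finset α)
    (hf : (s : Set ι).Pairwise fun i j => #(f i ∩ f j) ≤ 1) :
    ∑ i ∈ s, #(f i) ≤ #(s.biUnion f) + (#s).choose 2 := by
  induction s using Finset.induction_on with
  | empty => simp
  | insert a s ha ih =>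
    rw [coe_insert, Set.pairwise_insert] at hf
    have hcap : #(f a ∩ s.biUnion f) ≤ #s := calc
      #(f a ∩ s.biUnion f) = #(s.biUnion fun i => f a ∩ f i) := by rw [inter_biUnion]
      _ ≤ ∑ i ∈ s, #(f a ∩ f i) := card_biUnion_le
      _ ≤ ∑ _i ∈ s, 1 := sum_le_sum fun i hi => (hf.2 i hi (by rintro rfl; exact ha hi)).1
      _ = #s := by simp
    have hchoose : (#s + 1).choose 2 = #s + (#s).choose 2 := by
      rw [Nat.choose_succ_succ', Nat.choose_one_right]
    have hunion := card_union_add_card_inter (f a) (s.biUnion f)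
    rw [sum_insert ha, card_insert_of_notMem ha, hchoose, biUnion_insert]
    have := ih hf.1
    omega

lemma le_add_three_of_mul_le_add_choose_two {u v w k : ℕ} (hv : 2 ≤ v)
    (hV : v * u ≤ w + v.choose 2) (hU : v * u ≤ w + u.choose 2) (hw : w ≤ u + v + k) :
    u ≤ k + 3 := by
  have two_mul_choose (n : ℕ) : 2 * n.choose 2 = n * (n - 1) := by
    rw [Nat.choose_two_right, Nat.mul_div_cancel' (Nat.even_mul_pred_self n).two_dvd]
  have hV2 := two_mul_choose v
  have hU2 := two_mul_choose u
  -- for `v ≤ u` this comes down to `(v - 2)(v - 3) ≥ 0`, for `u < v` to `u² - 3u + 4 > 0`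
  rcases le_or_gt v u with hvu | huv
  · obtain ⟨v, rfl⟩ : ∃ v', v = v' + 1 := ⟨v - 1, by omega⟩
    simp only [Nat.add_sub_cancel] at hV2
    nlinarith
  · rcases Nat.eq_zero_or_pos u with rfl | hu
    · omega
    obtain ⟨u, rfl⟩ : ∃ u', u = u' + 1 := ⟨u - 1, by omega⟩
    simp only [Nat.add_sub_cancel] at hU2
    nlinarith

section Fragments
variable {G : Type*} [Group G] [DecidableEq G] {n : ℕ} {A B C : Finset G}

lemma card_inter_mul_add_card_union_mul_le (A B C : Finset G) :
    #((A ∩ B) * C) + #((A ∪ B) * C) ≤ #(A * C) + #(B * C) := by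
  have := card_union_add_card_inter (A * C) (B * C)
  have := card_le_card (inter_mul_subset (s₁ := A) (s₂ := B) (t := C))
  rw [union_mul]
  omega

lemma IsNFragment.smul_finset (hA : IsNFragment n C A) (g : G) : IsNFragment n C (g • A) := by
  refine ⟨by rw [card_smul_finset]; exact hA.1, fun X hX => ?_⟩
  rw [smul_mul_assoc, card_smul_finset, card_smul_finset]
  exact hA.2 X hX

lemma IsNFragment.inter (hA : IsNFragment n C A) (hB : IsNFragment n C B) (hn : n ≤ #(A ∩ B)) :
    IsNFragment n C (A ∩ B) := by
  refine ⟨hn, fun X hX => ?_⟩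
  have hsub := card_inter_mul_add_card_union_mul_le A B C
  have hcard := card_union_add_card_inter A B
  have hAunion := hA.2 (A ∪ B) (hn.trans (card_le_card inter_subset_union))
  have hBX := hB.2 X hX
  zify at hsub hcard
  linarith

lemma IsNAtom.subset_of_isNFragment (hA : IsNAtom n C A) (hB : IsNFragment n C B)
    (hn : n ≤ #(A ∩ B)) : A ⊆ B :=
  inter_eq_left.1 (eq_of_subset_of_card_le inter_subset_left (hA.2 _ (hA.1.inter hB hn)))

lemma exists_isNAtom (hC : C.Nonempty) (hA : n ≤ #A) : ∃ V, IsNAtom n C V := by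
  have hcard (X : Finset G) : #X ≤ #(X * C) := card_le_card_mul_right hC
  obtain ⟨V, hV⟩ := exists_minimalFor_of_wellFoundedLT (fun X : Finset G => n ≤ #X)
    (fun X => #(X * C) - #X) ⟨A, hA⟩
  have hfrag : IsNFragment n C V := by
    refine ⟨hV.1, fun X hX => ?_⟩
    have := hV.le hX
    have := hcard X
    have := hcard V
    omega
  obtain ⟨U, hU⟩ := exists_minimalFor_of_wellFoundedLT (IsNFragment n C) card ⟨V, hfrag⟩
  exact ⟨U, hU.1, fun W hW => hU.le hW⟩

lemma eq_one_of_smul_finset_eq (hG : ∀ g : G, g ≠ 1 → ¬IsOfFinOrder g) (hA : A.Nonempty)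
    {g : G} (h : g • A = A) : g = 1 := by
  by_contra hg
  obtain ⟨a, ha⟩ := hA
  have hinj : Function.Injective fun k : ℕ => g ^ k * a :=
    (mul_left_injective a).comp (injective_pow_iff_not_isOfFinOrder.2 (hG g hg))
  refine Set.infinite_of_injective_forall_mem hinj (fun k => ?_) A.finite_toSet
  induction k with
  | zero => simpa using ha
  | succ k ih =>
    rw [mem_coe, ← h, pow_succ', mul_assoc]
    exact smul_mem_smul_finset ih

lemma IsNAtom.card_inter_smul_lt (hG : ∀ g : G, g ≠ 1 → ¬IsOfFinOrder g) (hn : n ≠ 0)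
    (hA : IsNAtom n C A) {g : G} (hg : g ≠ 1) : #(A ∩ g • A) < n := by
  by_contra! h
  have hsub : A ⊆ g • A := hA.subset_of_isNFragment (hA.1.smul_finset g) h
  have heq : g • A = A := (eq_of_subset_of_card_le hsub (card_smul_finset g A).le).symm
  exact hg (eq_one_of_smul_finset_eq hG (card_pos.1 (by have := hA.1.1; omega)) heq)

end Fragments

section Translates
variable {G : Type*} [Group G] [DecidableEq G] {A B : Finset G}

lemma card_inv_inter_smul_le_one (hA : ∀ g : G, g ≠ 1 → #(A ∩ g • A) ≤ 1) {g : G}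
    (hg : g ≠ 1) : #(A⁻¹ ∩ g • A⁻¹) ≤ 1 := by
  refine card_le_one.2 fun x hx y hy => by_contra fun hxy => hg ?_
  simp only [mem_inter, mem_inv', ← inv_smul_mem_iff, smul_eq_mul, mul_inv_rev, inv_inv] at hx hy
  -- `x⁻¹` and `x⁻¹ g` both lie in `A ∩ (x⁻¹ y) • A`
  have hxy' : x⁻¹ * y ≠ 1 := by rwa [ne_eq, inv_mul_eq_one]
  have h₁ : x⁻¹ ∈ (x⁻¹ * y) • A :=
    mem_smul_finset.2 ⟨y⁻¹, hy.1, by rw [smul_eq_mul, mul_inv_cancel_right]⟩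
  have h₂ : x⁻¹ * g ∈ (x⁻¹ * y) • A :=
    mem_smul_finset.2 ⟨y⁻¹ * g, hy.2, by rw [smul_eq_mul, mul_assoc, mul_inv_cancel_left]⟩
  simpa using card_le_one.1 (hA _ hxy') _ (mem_inter.2 ⟨hx.1, h₁⟩) _ (mem_inter.2 ⟨hx.2, h₂⟩)

lemma card_mul_card_le_card_mul_add_choose_two_left (hB : ∀ g : G, g ≠ 1 → #(B ∩ g • B) ≤ 1)
    (A : Finset G) : #A * #B ≤ #(A * B) + (#A).choose 2 := by
  have hpair : (A : Set G).Pairwise fun a b => #(a • B ∩ b • B) ≤ 1 := by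
    intro a _ b _ hab
    have hb : b • B = a • (a⁻¹ * b) • B := by rw [smul_smul, mul_inv_cancel_left]
    rw [hb, ← smul_finset_inter, card_smul_finset]
    exact hB _ (by rwa [ne_eq, inv_mul_eq_one])
  simpa [card_smul_finset, biUnion_smul_finset] using
    sum_card_le_card_biUnion_add_choose_two A (· • B) hpair

lemma card_mul_card_le_card_mul_add_choose_two_right (hA : ∀ g : G, g ≠ 1 → #(A ∩ g • A) ≤ 1)
    (B : Finset G) : #A * #B ≤ #(A * B) + (#B).choose 2 := by
  have := card_mul_card_le_card_mul_add_choose_two_left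
    (fun _ => card_inv_inter_smul_le_one hA) B⁻¹
  rwa [← mul_inv_rev, card_inv, card_inv, card_inv, mul_comm] at this

end Translates

theorem stmt6 {G : Type*} [Group G] [DecidableEq G]
    (hG : ∀ g : G, g ≠ 1 → ¬IsOfFinOrder g)
    (C : Finset G) (hC : 3 ≤ C.card) (U : Finset G) (hU : IsNAtom 2 C U)
    (k : ℕ) (hk : (U * C).card ≤ U.card + C.card + k) :
    U.card ≤ k + 3 := by
  have hU2 : 2 ≤ #U := hU.1.1
  have hUtrans (g : G) (hg : g ≠ 1) : #(U ∩ g • U) ≤ 1 :=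
    Nat.lt_succ_iff.1 (hU.card_inter_smul_lt hG two_ne_zero hg)
  obtain ⟨V, hV⟩ := exists_isNAtom (card_pos.1 (by omega : 0 < #U)).inv hU2
  have hVtrans (g : G) (hg : g ≠ 1) : #(V ∩ g • V) ≤ 1 :=
    Nat.lt_succ_iff.1 (hV.card_inter_smul_lt hG two_ne_zero hg)
  have hVU : #(V * U⁻¹) + #C ≤ #(U * C) + #V := by
    have := hV.1.2 C⁻¹ (by rw [card_inv]; omega)
    rw [← mul_inv_rev, card_inv, card_inv] at this
    omega
  have hleft := card_mul_card_le_card_mul_add_choose_two_left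
    (fun _ => card_inv_inter_smul_le_one hUtrans) V
  have hright := card_mul_card_le_card_mul_add_choose_two_right hVtrans U⁻¹
  rw [card_inv] at hleft hright
  exact le_add_three_of_mul_le_add_choose_two hV.1.1 hleft hright (by omega)
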